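/- arXiv:2008.07529 — 6 statements merged into one kernel-verified Lean document; each statement's English description precedes it below -/
import Mathlib

section
/- Let a, b, c be real numbers with b ≤ 3a²/8, and let c₁ = c₀ + (2√6/9)·√((3a²/8 − b)³), c₂ = c₀ − (2√6/9)·√((3a²/8 − b)³), where c₀ = (a/2)(b − a²/4). Then there exist real numbers μ₁, μ₂, μ₃ such that 4x³ + 3ax² + 2bx + c = 4(x − μ₁)(x − μ₂)(x − μ₃) for all real x if and only if c₂ ≤ c ≤ c₁. -/
/-!
Substituting `x = t - a/4` turns `4x³ + 3ax² + 2bx + c` into `4(t³ + Pt + Q)` with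
`P = b/2 - 3a²/16` and `Q = (c - c₀)/4`, and a depressed cubic splits over `ℝ` exactly when
`4P³ + 27Q² ≤ 0`. Necessity is the identity `-(4P³ + 27Q²) = ((r₁ - r₂)(r₂ - r₃)(r₃ - r₁))²`
for roots summing to zero. For sufficiency, with `m = √(-P/3)` the values at `∓m` are
`Q ± 2m³`, of opposite signs, so the intermediate value theorem gives a root `r ∈ [-m, m]`,
and the remaining quadratic factor `t² + rt + r² + P` has discriminant `-3r² - 4P ≥ 0`.
Finally `4P³ + 27Q² ≤ 0` reads `(c - c₀)² ≤ 8(3a²/8 - b)³/27 = (c₁ - c₀)²`.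
-/

namespace DepressedCubic

lemma neg_disc_eq_sq (r₁ r₂ r₃ : ℝ) (h : r₁ + r₂ + r₃ = 0) :
    -(4 * (r₁ * r₂ + r₁ * r₃ + r₂ * r₃) ^ 3 + 27 * (r₁ * r₂ * r₃) ^ 2) =
      ((r₁ - r₂) * (r₂ - r₃) * (r₃ - r₁)) ^ 2 := by
  obtain rfl : r₃ = -r₁ - r₂ := by linarith
  ring

lemma disc_nonpos_of_splits {P Q r₁ r₂ r₃ : ℝ}
    (h : ∀ t : ℝ, t ^ 3 + P * t + Q = (t - r₁) * (t - r₂) * (t - r₃)) :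
    4 * P ^ 3 + 27 * Q ^ 2 ≤ 0 := by
  have hsum : r₁ + r₂ + r₃ = 0 := by linear_combination (h 1 + h (-1)) / 2 - h 0
  have hP : P = r₁ * r₂ + r₁ * r₃ + r₂ * r₃ := by linear_combination (h 1 - h (-1)) / 2
  have hQ : Q = -(r₁ * r₂ * r₃) := by linear_combination h 0
  rw [hP, hQ, neg_sq]
  linarith [neg_disc_eq_sq r₁ r₂ r₃ hsum, sq_nonneg ((r₁ - r₂) * (r₂ - r₃) * (r₃ - r₁))]

lemma exists_root_of_disc_nonpos {P Q : ℝ} (hdisc : 4 * P ^ 3 + 27 * Q ^ 2 ≤ 0) :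
    ∃ r : ℝ, r ^ 3 + P * r + Q = 0 ∧ 3 * r ^ 2 + P ≤ 0 := by
  have hP : P ≤ 0 := by
    by_contra! hP
    nlinarith [pow_pos hP 3, sq_nonneg Q]
  obtain ⟨m, hm0, hm2⟩ : ∃ m : ℝ, 0 ≤ m ∧ m ^ 2 = -P / 3 :=
    ⟨_, Real.sqrt_nonneg _, Real.sq_sqrt (by linarith)⟩
  have hQm : Q ^ 2 ≤ (2 * m ^ 3) ^ 2 :=
    calc Q ^ 2 ≤ -4 * P ^ 3 / 27 := by linarith
      _ = (2 * m ^ 3) ^ 2 := by rw [show (2 * m ^ 3) ^ 2 = 4 * (m ^ 2) ^ 3 by ring, hm2]; ring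
  obtain ⟨hQl, hQr⟩ := abs_le_of_sq_le_sq' hQm (by positivity)
  have hval : ∀ s : ℝ, s ^ 2 = m ^ 2 → s ^ 3 + P * s + Q = Q - 2 * m ^ 2 * s := fun s hs => by
    linear_combination s * hs + 3 * s * hm2
  have hcont : Continuous fun t : ℝ => t ^ 3 + P * t + Q := by fun_prop
  have h0mem : (0 : ℝ) ∈ Set.Icc (m ^ 3 + P * m + Q) ((-m) ^ 3 + P * -m + Q) := by
    rw [hval m rfl, hval (-m) (neg_sq m), Set.mem_Icc]
    constructor <;> linarith
  obtain ⟨r, ⟨hrl, hrr⟩, hr⟩ :=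
    intermediate_value_Icc' (by linarith : -m ≤ m) hcont.continuousOn h0mem
  refine ⟨r, hr, ?_⟩
  nlinarith [mul_nonneg (by linarith : 0 ≤ m - r) (by linarith : 0 ≤ m + r)]

lemma splits_of_root {P Q r : ℝ} (hr : r ^ 3 + P * r + Q = 0) (hrP : 3 * r ^ 2 + P ≤ 0) :
    ∃ r₁ r₂ r₃ : ℝ, ∀ t : ℝ,
      t ^ 3 + P * t + Q = (t - r₁) * (t - r₂) * (t - r₃) := by
  obtain ⟨D, hD⟩ : ∃ D : ℝ, D ^ 2 = -3 * r ^ 2 - 4 * P :=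
    ⟨_, Real.sq_sqrt (by linarith [sq_nonneg r])⟩
  exact ⟨r, (D - r) / 2, (-D - r) / 2, fun t => by linear_combination (t - r) * hD / 4 + hr⟩

theorem splits_iff_disc_nonpos (P Q : ℝ) :
    (∃ r₁ r₂ r₃ : ℝ, ∀ t : ℝ,
      t ^ 3 + P * t + Q = (t - r₁) * (t - r₂) * (t - r₃)) ↔
      4 * P ^ 3 + 27 * Q ^ 2 ≤ 0 := by
  refine ⟨fun ⟨_, _, _, h⟩ => disc_nonpos_of_splits h, fun hdisc => ?_⟩
  obtain ⟨r, hr, hrP⟩ := exists_root_of_disc_nonpos hdisc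
  exact splits_of_root hr hrP

end DepressedCubic

lemma auxCubic_splits_iff_depressed (a b c : ℝ) :
    (∃ μ₁ μ₂ μ₃ : ℝ, ∀ x : ℝ,
        4 * x ^ 3 + 3 * a * x ^ 2 + 2 * b * x + c = 4 * (x - μ₁) * (x - μ₂) * (x - μ₃)) ↔
      ∃ r₁ r₂ r₃ : ℝ, ∀ t : ℝ,
        t ^ 3 + (b / 2 - 3 * a ^ 2 / 16) * t + (c - a / 2 * (b - a ^ 2 / 4)) / 4 =
          (t - r₁) * (t - r₂) * (t - r₃) := by
  constructor
  · rintro ⟨μ₁, μ₂, μ₃, h⟩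
    exact ⟨μ₁ + a / 4, μ₂ + a / 4, μ₃ + a / 4,
      fun t => by linear_combination h (t - a / 4) / 4⟩
  · rintro ⟨r₁, r₂, r₃, h⟩
    exact ⟨r₁ - a / 4, r₂ - a / 4, r₃ - a / 4,
      fun x => by linear_combination 4 * h (x + a / 4)⟩

/-- For `b ≤ 3a²/8`, the first auxiliary cubic `4x³ + 3ax² + 2bx + c` splits into real linear
factors `4(x − μ₁)(x − μ₂)(x − μ₃)` if and only if `c₂ ≤ c ≤ c₁`, where
`c₁,₂ = c₀ ± (2√6/9)√((3a²/8 − b)³)` and `c₀ = (a/2)(b − a²/4)`. -/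
theorem stmt_3 (a b c c₀ c₁ c₂ : ℝ)
    (hb : b ≤ 3 * a ^ 2 / 8)
    (hc₀ : c₀ = a / 2 * (b - a ^ 2 / 4))
    (hc₁ : c₁ = c₀ + 2 * Real.sqrt 6 / 9 * Real.sqrt ((3 * a ^ 2 / 8 - b) ^ 3))
    (hc₂ : c₂ = c₀ - 2 * Real.sqrt 6 / 9 * Real.sqrt ((3 * a ^ 2 / 8 - b) ^ 3)) :
    (∃ μ₁ μ₂ μ₃ : ℝ, ∀ x : ℝ,
        4 * x ^ 3 + 3 * a * x ^ 2 + 2 * b * x + c =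
          4 * (x - μ₁) * (x - μ₂) * (x - μ₃)) ↔
      c₂ ≤ c ∧ c ≤ c₁ := by
  set K := 2 * Real.sqrt 6 / 9 * Real.sqrt ((3 * a ^ 2 / 8 - b) ^ 3)
  have hK0 : 0 ≤ K := by positivity
  have hK2 : K ^ 2 = 8 * (3 * a ^ 2 / 8 - b) ^ 3 / 27 := by
    have h6 := Real.sq_sqrt (show (0 : ℝ) ≤ 6 by norm_num)
    have hp3 := Real.sq_sqrt (pow_nonneg (sub_nonneg.mpr hb) 3)
    linear_combination
      (4 * Real.sqrt ((3 * a ^ 2 / 8 - b) ^ 3) ^ 2 / 81) * h6 + 24 / 81 * hp3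
  rw [auxCubic_splits_iff_depressed, DepressedCubic.splits_iff_disc_nonpos, hc₁, hc₂, ← hc₀]
  calc 4 * (b / 2 - 3 * a ^ 2 / 16) ^ 3 + 27 * ((c - c₀) / 4) ^ 2 ≤ 0
      ↔ (c - c₀) ^ 2 ≤ K ^ 2 := by
        rw [hK2]; constructor <;> intro h <;> nlinarith
    _ ↔ c₀ - K ≤ c ∧ c ≤ c₀ + K := by
        rw [sq_le_sq, abs_of_nonneg hK0, abs_le]
        constructor <;> rintro ⟨h₁, h₂⟩ <;> constructor <;> linarith
end

section
/- Let a, b, c be real numbers with b < 3a²/8 and put s = √(3a²/8 − b). Define η₁ = −a/4 + (√6/6)s, η₂ = −a/4 − (√6/6)s, θ₁ = −a/4 − (√6/3)s, θ₂ = −a/4 + (√6/3)s, and c₁,₂ = (a/2)(b − a²/4) ± (2√6/9)s³. If c₂ < c < c₁, then the cubic 4x³ + 3ax² + 2bx + c = 0 has exactly three real roots μ₃ < μ₂ < μ₁, and these satisfy the isolation inequalities θ₁ < μ₃ < η₂ < μ₂ < η₁ < μ₁ < θ₂; that is, the quartic x⁴ + ax³ + bx² + cx + d has a local minimum in (θ₁,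 η₂), a local maximum in (η₂, η₁) and a local minimum in (η₁, θ₂). -/
/-!
Shifting by the inflection point `-a/4` turns the cubic into `4t³ - 12u²t + (c - c₀)` with
`u = (√6/6)s`. Its values at `t = -2u, -u, u, 2u` are `c - c₁, c - c₂, c - c₁, c - c₂`, so for
`c₂ < c < c₁` it changes sign on each of `(θ₁, η₂)`, `(η₂, η₁)`, `(η₁, θ₂)`. The intermediate value
theorem gives a root in each interval, and a cubic has no further roots.
-/

open Set

theorem exists_mem_Ioo_eq_zero_of_mul_neg {α : Type*} [ConditionallyCompleteLinearOrder α]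
    [TopologicalSpace α] [OrderTopology α] [DenselyOrdered α] {f : α → ℝ} {x y : α}
    (hxy : x ≤ y) (hf : ContinuousOn f (Icc x y)) (h : f x * f y < 0) :
    ∃ z ∈ Ioo x y, f z = 0 := by
  rcases mul_neg_iff.1 h with ⟨hx, hy⟩ | ⟨hx, hy⟩
  · exact intermediate_value_Ioo' hxy hf ⟨hy, hx⟩
  · exact intermediate_value_Ioo hxy hf ⟨hx, hy⟩

theorem cubic_eq_mul_of_three_roots {R : Type*} [CommRing R] [IsDomain R] {A B C D p q r : R}
    (hp : A * p ^ 3 + B * p ^ 2 + C * p + D = 0) (hq : A * q ^ 3 + B * q ^ 2 + C * q + D = 0)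
    (hr : A * r ^ 3 + B * r ^ 2 + C * r + D = 0) (hpq : p ≠ q) (hqr : q ≠ r) (hpr : p ≠ r)
    (x : R) : A * x ^ 3 + B * x ^ 2 + C * x + D = A * ((x - p) * (x - q) * (x - r)) := by
  -- divided differences of the cubic over the three roots
  have hpq' : A * (p ^ 2 + p * q + q ^ 2) + B * (p + q) + C = 0 :=
    (mul_eq_zero.1 (by linear_combination hp - hq :
      (p - q) * (A * (p ^ 2 + p * q + q ^ 2) + B * (p + q) + C) = 0)).resolve_left
      (sub_ne_zero.2 hpq)
  have hqr' : A * (q ^ 2 + q * r + r ^ 2) + B * (q + r) + C = 0 :=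
    (mul_eq_zero.1 (by linear_combination hq - hr :
      (q - r) * (A * (q ^ 2 + q * r + r ^ 2) + B * (q + r) + C) = 0)).resolve_left
      (sub_ne_zero.2 hqr)
  have he₁ : A * (p + q + r) + B = 0 :=
    (mul_eq_zero.1 (by linear_combination hpq' - hqr' :
      (p - r) * (A * (p + q + r) + B) = 0)).resolve_left (sub_ne_zero.2 hpr)
  have he₂ : A * (p * q + q * r + r * p) = C := by
    linear_combination -hpq' + (p + q) * he₁
  have he₃ : A * (p * q * r) = -D := by
    linear_combination hp - p ^ 2 * he₁ + p * he₂
  linear_combination x ^ 2 * he₁ - x * he₂ + he₃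

theorem cubic_roots_of_sign_changes {A B C D x₀ x₁ x₂ x₃ : ℝ} (hA : A ≠ 0) (f : ℝ → ℝ)
    (hf : ∀ x, f x = A * x ^ 3 + B * x ^ 2 + C * x + D)
    (h₀₁ : x₀ < x₁) (h₁₂ : x₁ < x₂) (h₂₃ : x₂ < x₃)
    (hf₀₁ : f x₀ * f x₁ < 0) (hf₁₂ : f x₁ * f x₂ < 0) (hf₂₃ : f x₂ * f x₃ < 0) :
    ∃ μ₁ μ₂ μ₃ : ℝ, (∀ x, f x = 0 ↔ x = μ₁ ∨ x = μ₂ ∨ x = μ₃) ∧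
      x₀ < μ₃ ∧ μ₃ < x₁ ∧ x₁ < μ₂ ∧ μ₂ < x₂ ∧ x₂ < μ₁ ∧ μ₁ < x₃ := by
  have hcont : Continuous f := by
    rw [funext hf]
    fun_prop
  obtain ⟨μ₃, ⟨h₀, h₁⟩, hμ₃⟩ :=
    exists_mem_Ioo_eq_zero_of_mul_neg h₀₁.le hcont.continuousOn hf₀₁
  obtain ⟨μ₂, ⟨h₁', h₂⟩, hμ₂⟩ :=
    exists_mem_Ioo_eq_zero_of_mul_neg h₁₂.le hcont.continuousOn hf₁₂
  obtain ⟨μ₁, ⟨h₂', h₃⟩, hμ₁⟩ :=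
    exists_mem_Ioo_eq_zero_of_mul_neg h₂₃.le hcont.continuousOn hf₂₃
  refine ⟨μ₁, μ₂, μ₃, fun x => ?_, h₀, h₁, h₁', h₂, h₂', h₃⟩
  rw [hf] at hμ₁ hμ₂ hμ₃ ⊢
  rw [cubic_eq_mul_of_three_roots hμ₁ hμ₂ hμ₃ (by linarith) (by linarith) (by linarith)]
  simp only [mul_eq_zero, hA, sub_eq_zero, false_or, or_assoc]

theorem cubic_eval_neg_quarter_add (a b c s k : ℝ) (hs : s ^ 2 = 3 * a ^ 2 / 8 - b) :
    4 * (-a / 4 + k * (√6 / 6 * s)) ^ 3 + 3 * a * (-a / 4 + k * (√6 / 6 * s)) ^ 2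
        + 2 * b * (-a / 4 + k * (√6 / 6 * s)) + c
      = c - a / 2 * (b - a ^ 2 / 4) + k * (k ^ 2 - 3) * (√6 / 9 * s ^ 3) := by
  have h6 : √6 ^ 2 = 6 := Real.sq_sqrt (by norm_num)
  linear_combination (k * √6 * s / 3) * hs + (k ^ 3 * √6 * s ^ 3 / 54) * h6

/-- For `b < 3a²/8`, `s = √(3a²/8 − b)`, `η₁,₂ = −a/4 ± (√6/6)s`, `θ₁ = −a/4 − (√6/3)s`,
`θ₂ = −a/4 + (√6/3)s`, `c₁,₂ = (a/2)(b − a²/4) ± (2√6/9)s³`: if `c₂ < c < c₁`, then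
`4x³ + 3ax² + 2bx + c = 0` has exactly three real roots `μ₃ < μ₂ < μ₁`, and these satisfy
the isolation inequalities `θ₁ < μ₃ < η₂ < μ₂ < η₁ < μ₁ < θ₂`. -/
theorem stmt_13 (a b c s η₁ η₂ θ₁ θ₂ c₁ c₂ : ℝ)
    (hb : b < 3 * a ^ 2 / 8)
    (hs : s = Real.sqrt (3 * a ^ 2 / 8 - b))
    (hη₁ : η₁ = -a / 4 + Real.sqrt 6 / 6 * s)
    (hη₂ : η₂ = -a / 4 - Real.sqrt 6 / 6 * s)
    (hθ₁ : θ₁ = -a / 4 - Real.sqrt 6 / 3 * s)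
    (hθ₂ : θ₂ = -a / 4 + Real.sqrt 6 / 3 * s)
    (hc₁ : c₁ = a / 2 * (b - a ^ 2 / 4) + 2 * Real.sqrt 6 / 9 * s ^ 3)
    (hc₂ : c₂ = a / 2 * (b - a ^ 2 / 4) - 2 * Real.sqrt 6 / 9 * s ^ 3)
    (hc : c₂ < c ∧ c < c₁) :
    ∃ μ₁ μ₂ μ₃ : ℝ,
      (∀ x : ℝ, 4 * x ^ 3 + 3 * a * x ^ 2 + 2 * b * x + c = 0 ↔
          x = μ₁ ∨ x = μ₂ ∨ x = μ₃) ∧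
      θ₁ < μ₃ ∧ μ₃ < η₂ ∧ η₂ < μ₂ ∧ μ₂ < η₁ ∧ η₁ < μ₁ ∧ μ₁ < θ₂ := by
  obtain ⟨hc₂c, hcc₁⟩ := hc
  have hs_sq : s ^ 2 = 3 * a ^ 2 / 8 - b := hs ▸ Real.sq_sqrt (by linarith)
  have hu : 0 < √6 / 6 * s := by
    have : 0 < s := hs ▸ Real.sqrt_pos.2 (by linarith)
    positivity
  have hval := fun k => cubic_eval_neg_quarter_add a b c s k hs_sq
  have hθ₁c : 4 * θ₁ ^ 3 + 3 * a * θ₁ ^ 2 + 2 * b * θ₁ + c = c - c₁ := by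
    rw [show θ₁ = -a / 4 + -2 * (√6 / 6 * s) by rw [hθ₁]; ring, hval, hc₁]; ring
  have hη₂c : 4 * η₂ ^ 3 + 3 * a * η₂ ^ 2 + 2 * b * η₂ + c = c - c₂ := by
    rw [show η₂ = -a / 4 + -1 * (√6 / 6 * s) by rw [hη₂]; ring, hval, hc₂]; ring
  have hη₁c : 4 * η₁ ^ 3 + 3 * a * η₁ ^ 2 + 2 * b * η₁ + c = c - c₁ := by
    rw [show η₁ = -a / 4 + 1 * (√6 / 6 * s) by rw [hη₁]; ring, hval, hc₁]; ring
  have hθ₂c : 4 * θ₂ ^ 3 + 3 * a * θ₂ ^ 2 + 2 * b * θ₂ + c = c - c₂ := by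
    rw [show θ₂ = -a / 4 + 2 * (√6 / 6 * s) by rw [hθ₂]; ring, hval, hc₂]; ring
  have hneg : c - c₁ < 0 := by linarith
  have hpos : 0 < c - c₂ := by linarith
  exact cubic_roots_of_sign_changes (by norm_num) _ (fun _ => rfl)
    (by rw [hθ₁, hη₂]; linarith) (by rw [hη₂, hη₁]; linarith) (by rw [hη₁, hθ₂]; linarith)
    (by rw [hθ₁c, hη₂c]; exact mul_neg_of_neg_of_pos hneg hpos)
    (by rw [hη₂c, hη₁c]; exact mul_neg_of_pos_of_neg hpos hneg)
    (by rw [hη₁c, hθ₂c]; exact mul_neg_of_neg_of_pos hneg hpos)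
end

section
/- Let a, b, c be real numbers with b < 3a²/8 and put s = √(3a²/8 − b), θ₁ = −a/4 − (√6/3)s, θ₂ = −a/4 + (√6/3)s, and c₁,₂ = (a/2)(b − a²/4) ± (2√6/9)s³. (i) If c < c₂, then the cubic 4x³ + 3ax² + 2bx + c = 0 has exactly one real root μ, and μ > θ₂. (ii) If c > c₁, then the cubic 4x³ + 3ax² + 2bx + c = 0 has exactly one real root μ, and μ < θ₁. In either case the quartic x⁴ + ax³ + bx² + cx + d has a single stationary point (a local minimum), located to the right of θ₂ in case (i) and to the left of θ₁ in case (ii). -/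
/-!
After the shift `y = x + a/4` the cubic becomes `4y³ - 2s²y + (c - c₀)`, and with `t = (√6/3)s`
(so that `3t² = 2s²` and `t³ = (2√6/9)s³`) it factors as `4(y - t)(y + t/2)² + (c - c₂)`, and
equally as `-(4(-y - t)(-y + t/2)² + (c₁ - c))`. So it suffices to know that `4(y - t)(y + t/2)² + e`
with `t ≥ 0` and `e < 0` has exactly one real root, and that it exceeds `t`: for `y ≤ t` the value is
at most `e < 0`, while on `[t, ∞)` the cubic is strictly increasing and eventually positive.
-/

namespace StationaryCubic

lemma strictMonoOn_factored (t : ℝ) (ht : 0 ≤ t) :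
    StrictMonoOn (fun y : ℝ => 4 * (y - t) * (y + t / 2) ^ 2) (Set.Ici t) := by
  intro x hx y hy hxy
  simp only [Set.mem_Ici] at hx hy
  have hquad : 3 * t ^ 2 < 4 * (x ^ 2 + x * y + y ^ 2) := by nlinarith
  have hdiff : 4 * (y - t) * (y + t / 2) ^ 2 - 4 * (x - t) * (x + t / 2) ^ 2
      = (y - x) * (4 * (x ^ 2 + x * y + y ^ 2) - 3 * t ^ 2) := by ring
  have : 0 < (y - x) * (4 * (x ^ 2 + x * y + y ^ 2) - 3 * t ^ 2) :=
    mul_pos (by linarith) (by linarith)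
  linarith

lemma lt_of_factored_eq_zero {t e y : ℝ} (he : e < 0)
    (hy : 4 * (y - t) * (y + t / 2) ^ 2 + e = 0) : t < y := by
  by_contra! hyt
  nlinarith [mul_nonneg (sub_nonneg.mpr hyt) (sq_nonneg (y + t / 2))]

lemma exists_factored_eq_zero {t e : ℝ} (ht : 0 ≤ t) (he : e < 0) :
    ∃ μ, 4 * (μ - t) * (μ + t / 2) ^ 2 + e = 0 := by
  obtain ⟨T, hTt⟩ : ∃ T, T - t = 1 - e / 4 := ⟨t + 1 - e / 4, by ring⟩
  have hT : 0 < 4 * (T - t) * (T + t / 2) ^ 2 + e := by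
    have hsq : 1 ≤ (T + t / 2) ^ 2 := by nlinarith
    nlinarith [mul_le_mul_of_nonneg_left hsq (by linarith : 0 ≤ 4 * (T - t))]
  obtain ⟨μ, -, hμ⟩ := intermediate_value_Icc (by linarith : t ≤ T)
    (f := fun y => 4 * (y - t) * (y + t / 2) ^ 2 + e) (by fun_prop)
    ⟨by simp [he.le], hT.le⟩
  exact ⟨μ, hμ⟩

theorem existsUnique_factored_eq_zero {t e : ℝ} (ht : 0 ≤ t) (he : e < 0) :
    ∃ μ, (∀ y, 4 * (y - t) * (y + t / 2) ^ 2 + e = 0 ↔ y = μ) ∧ t < μ := by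
  obtain ⟨μ, hμ⟩ := exists_factored_eq_zero ht he
  have htμ := lt_of_factored_eq_zero he hμ
  refine ⟨μ, fun y => ⟨fun hy => ?_, fun hyμ => hyμ ▸ hμ⟩, htμ⟩
  have hty := lt_of_factored_eq_zero he hy
  exact (strictMonoOn_factored t ht).injOn (Set.mem_Ici.2 hty.le) (Set.mem_Ici.2 htμ.le)
    (by linarith)

variable {a b s : ℝ}

lemma eq_factored_of_sq_eq (hs : s ^ 2 = 3 * a ^ 2 / 8 - b) (c x : ℝ) :
    4 * x ^ 3 + 3 * a * x ^ 2 + 2 * b * x + c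
      = 4 * (x + a / 4 - √6 / 3 * s) * (x + a / 4 + √6 / 3 * s / 2) ^ 2
        + (c - (a / 2 * (b - a ^ 2 / 4) - 2 * √6 / 9 * s ^ 3)) := by
  have h6 : √6 ^ 2 = 6 := Real.sq_sqrt (by norm_num)
  linear_combination ((x + a / 4) * s ^ 2 / 3 + √6 * s ^ 3 / 27) * h6 + 2 * (x + a / 4) * hs

lemma eq_neg_factored_of_sq_eq (hs : s ^ 2 = 3 * a ^ 2 / 8 - b) (c x : ℝ) :
    4 * x ^ 3 + 3 * a * x ^ 2 + 2 * b * x + c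
      = -(4 * (-(x + a / 4) - √6 / 3 * s) * (-(x + a / 4) + √6 / 3 * s / 2) ^ 2
        + (a / 2 * (b - a ^ 2 / 4) + 2 * √6 / 9 * s ^ 3 - c)) := by
  have h6 : √6 ^ 2 = 6 := Real.sq_sqrt (by norm_num)
  linear_combination ((x + a / 4) * s ^ 2 / 3 - √6 * s ^ 3 / 27) * h6 + 2 * (x + a / 4) * hs

end StationaryCubic

open StationaryCubic

/-- For `b < 3a²/8`, `s = √(3a²/8 − b)`, `θ₁ = −a/4 − (√6/3)s`, `θ₂ = −a/4 + (√6/3)s`,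
`c₁,₂ = (a/2)(b − a²/4) ± (2√6/9)s³`:
(i) if `c < c₂`, the cubic `4x³ + 3ax² + 2bx + c = 0` has exactly one real root `μ`, and
`μ > θ₂`; (ii) if `c > c₁`, the cubic has exactly one real root `μ`, and `μ < θ₁`. -/
theorem stmt_14 (a b c s θ₁ θ₂ c₁ c₂ : ℝ)
    (hb : b < 3 * a ^ 2 / 8)
    (hs : s = Real.sqrt (3 * a ^ 2 / 8 - b))
    (hθ₁ : θ₁ = -a / 4 - Real.sqrt 6 / 3 * s)
    (hθ₂ : θ₂ = -a / 4 + Real.sqrt 6 / 3 * s)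
    (hc₁ : c₁ = a / 2 * (b - a ^ 2 / 4) + 2 * Real.sqrt 6 / 9 * s ^ 3)
    (hc₂ : c₂ = a / 2 * (b - a ^ 2 / 4) - 2 * Real.sqrt 6 / 9 * s ^ 3) :
    (c < c₂ →
      ∃ μ : ℝ, (∀ x : ℝ, 4 * x ^ 3 + 3 * a * x ^ 2 + 2 * b * x + c = 0 ↔ x = μ) ∧ θ₂ < μ) ∧
    (c > c₁ →
      ∃ μ : ℝ, (∀ x : ℝ, 4 * x ^ 3 + 3 * a * x ^ 2 + 2 * b * x + c = 0 ↔ x = μ) ∧ μ < θ₁) := by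
  have hs2 : s ^ 2 = 3 * a ^ 2 / 8 - b := by rw [hs]; exact Real.sq_sqrt (by linarith)
  have ht : 0 ≤ √6 / 3 * s := by rw [hs]; positivity
  subst hθ₁ hθ₂ hc₁ hc₂
  constructor
  · intro hc
    obtain ⟨μ, hroot, hμ⟩ := existsUnique_factored_eq_zero ht (sub_neg.2 hc)
    refine ⟨μ - a / 4, fun x => ?_, by linarith⟩
    rw [eq_factored_of_sq_eq hs2, hroot]
    constructor <;> intro h <;> linarith
  · intro hc
    obtain ⟨μ, hroot, hμ⟩ := existsUnique_factored_eq_zero ht (sub_neg.2 hc)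
    refine ⟨-μ - a / 4, fun x => ?_, by linarith⟩
    rw [eq_neg_factored_of_sq_eq hs2, neg_eq_zero, hroot]
    constructor <;> intro h <;> linarith
end

section
/- Let a, b, c, d be real numbers with b > 3a²/8, c < 0 and d < 0. Then: (i) the cubic x³ + ax² + bx + c = 0 has a unique real root λ, and λ > 0; (ii) the quartic x⁴ + ax³ + bx² + cx + d = 0 has a real root x₂ with −d/c < x₂ < 0 (note −d/c < 0 here) and a real root x₁ with x₁ > λ. -/
/-! Writing `f(x) = x³ + ax² + bx + c`, the quartic is `q(x) = x f(x) + d`. The condition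
`b > 3a²/8` gives `a² < 3b`, so `f' = 3x² + 2ax + b` has no real zero and `f` is strictly
increasing; as `f(0) = c < 0`, its unique root `λ` is positive. For the quartic, `q(0) = d < 0`
and `q(λ) = d < 0`, while `q → +∞` at `+∞` gives a root beyond `λ`. At `t = -d/c < 0`
monotonicity gives `f(t) < f(0) = c`, hence `t f(t) > t c = -d` and `q(t) > 0`, which yields a
root in `(t, 0)`. -/

open Filter Polynomial Set

theorem Polynomial.Monic.tendsto_eval_atTop {P : ℝ[X]} (hP : P.Monic) (hdeg : 0 < P.natDegree) :
    Tendsto (fun x => P.eval x) atTop atTop :=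
  tendsto_atTop_of_leadingCoeff_nonneg P (natDegree_pos_iff_degree_pos.1 hdeg)
    (hP.leadingCoeff ▸ zero_le_one)

theorem tendsto_cubic_atTop (a b c : ℝ) :
    Tendsto (fun x : ℝ => x ^ 3 + a * x ^ 2 + b * x + c) atTop atTop := by
  set P : ℝ[X] := X ^ 3 + C a * X ^ 2 + C b * X + C c
  have hdeg : P.natDegree = 3 := by simp only [P]; compute_degree!
  have hP : P.Monic := by simp only [P]; monicity!
  simpa [P] using hP.tendsto_eval_atTop (by omega)

theorem tendsto_quartic_atTop (a b c d : ℝ) :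
    Tendsto (fun x : ℝ => x ^ 4 + a * x ^ 3 + b * x ^ 2 + c * x + d) atTop atTop := by
  set P : ℝ[X] := X ^ 4 + C a * X ^ 3 + C b * X ^ 2 + C c * X + C d
  have hdeg : P.natDegree = 4 := by simp only [P]; compute_degree!
  have hP : P.Monic := by simp only [P]; monicity!
  simpa [P] using hP.tendsto_eval_atTop (by omega)

theorem strictMono_cubic {a b : ℝ} (c : ℝ) (hab : a ^ 2 < 3 * b) :
    StrictMono (fun x : ℝ => x ^ 3 + a * x ^ 2 + b * x + c) := by
  intro x y hxy
  dsimp only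
  have hpos : 0 < x ^ 2 + x * y + y ^ 2 + a * (x + y) + b := by
    nlinarith [sq_nonneg (x - y), sq_nonneg (x + y + 2 * a / 3)]
  have hdiff : (y ^ 3 + a * y ^ 2 + b * y + c) - (x ^ 3 + a * x ^ 2 + b * x + c) =
      (y - x) * (x ^ 2 + x * y + y ^ 2 + a * (x + y) + b) := by ring
  rw [← sub_pos, hdiff]
  exact mul_pos (sub_pos.2 hxy) hpos

theorem exists_gt_eq_zero_of_tendsto_atTop {g : ℝ → ℝ} (hg : Continuous g)
    (htop : Tendsto g atTop atTop) {l : ℝ} (hl : g l < 0) : ∃ x, g x = 0 ∧ l < x := by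
  obtain ⟨M, hM, hlM⟩ := ((htop.eventually_gt_atTop 0).and (eventually_ge_atTop l)).exists
  obtain ⟨x, hx, hgx⟩ := intermediate_value_Ioc hlM hg.continuousOn ⟨hl, hM.le⟩
  exact ⟨x, hgx, hx.1⟩

theorem exists_mul_add_eq_zero_mem_Ioo {f : ℝ → ℝ} (hf : Continuous f) (hmono : StrictMono f)
    (hf0 : f 0 < 0) {d : ℝ} (hd : d < 0) : ∃ x ∈ Ioo (-d / f 0) 0, x * f x + d = 0 := by
  set t := -d / f 0
  have ht : t < 0 := div_neg_of_pos_of_neg (neg_pos.2 hd) hf0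
  have htf : t * f 0 = -d := div_mul_cancel₀ (-d) hf0.ne
  have hqt : 0 < t * f t + d := by
    linarith [mul_lt_mul_of_neg_left (hmono ht) ht]
  have hq : Continuous fun x => x * f x + d := by fun_prop
  obtain ⟨x, hx, hqx⟩ := intermediate_value_Ioo' ht.le hq.continuousOn
    (show (0 : ℝ) ∈ Ioo (0 * f 0 + d) (t * f t + d) by simp [hd, hqt])
  exact ⟨x, hx, hqx⟩

/-- For `b > 3a²/8`, `c < 0`, `d < 0`: (i) the cubic `x³ + ax² + bx + c = 0` has a unique
real root `λ`, and `λ > 0`; (ii) the quartic `x⁴ + ax³ + bx² + cx + d = 0` has a real root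
`x₂` with `−d/c < x₂ < 0` and a real root `x₁` with `x₁ > λ`. -/
theorem stmt_16 (a b c d : ℝ)
    (hb : b > 3 * a ^ 2 / 8) (hc : c < 0) (hd : d < 0) :
    ∃ l : ℝ,
      (∀ x : ℝ, x ^ 3 + a * x ^ 2 + b * x + c = 0 ↔ x = l) ∧ 0 < l ∧
      (∃ x₂ : ℝ, x₂ ^ 4 + a * x₂ ^ 3 + b * x₂ ^ 2 + c * x₂ + d = 0 ∧
        -d / c < x₂ ∧ x₂ < 0) ∧
      (∃ x₁ : ℝ, x₁ ^ 4 + a * x₁ ^ 3 + b * x₁ ^ 2 + c * x₁ + d = 0 ∧ l < x₁) := by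
  set f : ℝ → ℝ := fun x => x ^ 3 + a * x ^ 2 + b * x + c
  have hquartic (x : ℝ) : x ^ 4 + a * x ^ 3 + b * x ^ 2 + c * x + d = x * f x + d := by ring
  have hmono : StrictMono f := strictMono_cubic c (by nlinarith [sq_nonneg a])
  have hf0 : f 0 < 0 := by simpa [f] using hc
  obtain ⟨l, hfl, hl⟩ := exists_gt_eq_zero_of_tendsto_atTop (by fun_prop)
    (tendsto_cubic_atTop a b c) hf0
  refine ⟨l, fun x => ⟨fun hx => hmono.injective (hx.trans hfl.symm), fun hx => hx ▸ hfl⟩, hl,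
    ?_, ?_⟩
  · obtain ⟨x₂, ⟨hx₂, hx₂'⟩, hq⟩ := exists_mul_add_eq_zero_mem_Ioo (by fun_prop) hmono hf0 hd
    exact ⟨x₂, (hquartic x₂).trans hq, by simpa [f] using hx₂, hx₂'⟩
  · exact exists_gt_eq_zero_of_tendsto_atTop (by fun_prop) (tendsto_quartic_atTop a b c d)
      (by rw [hquartic, show f l = 0 from hfl]; simpa using hd)
end

section
/- Let a, b, c be real numbers with b > 3a²/8 and c < 0. Then the cubic 4x³ + 3ax² + 2bx + c = 0 has a unique real root μ, this μ is positive, and g(μ) := μ⁴ + aμ³ + bμ² + cμ < 0. Moreover, if d is a real number with d > −g(μ) = −(μ⁴ + aμ³ + bμ² + cμ), then the quartic x⁴ + ax³ + bx² + cx + d = 0 has no real roots. -/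
/-!
Let `g(x) = x⁴ + ax³ + bx² + cx` and `q = g'`. Expanding `g` around a stationary point `μ` gives
`g(x) - g(μ) = (x - μ)² ((x - μ)² + (4μ + a)(x - μ) + 6μ² + 3aμ + b)`, and the quadratic factor has
discriminant `3a²/2 - 4b - 8(μ + a/4)² < 0`. So every stationary point is a strict global minimum of
`g`, hence there is at most one. One exists and is positive by the intermediate value theorem, since
`q(0) = c < 0` and `q(x) ≥ 2(b - 3a²/8)x + c` for `x ≥ 0`. Finally `g(μ) < g(0) = 0` and
`g(x) + d ≥ g(μ) + d > 0`.
-/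

def quartic (a b c x : ℝ) : ℝ := x ^ 4 + a * x ^ 3 + b * x ^ 2 + c * x

def quarticDeriv (a b c x : ℝ) : ℝ := 4 * x ^ 3 + 3 * a * x ^ 2 + 2 * b * x + c

section

variable {a b c : ℝ}

theorem quartic_sub_quartic (a b c x μ : ℝ) :
    quartic a b c x - quartic a b c μ = quarticDeriv a b c μ * (x - μ) +
      (x - μ) ^ 2 * ((x - μ) ^ 2 + (4 * μ + a) * (x - μ) + (6 * μ ^ 2 + 3 * a * μ + b)) := by
  unfold quartic quarticDeriv
  ring

theorem quartic_taylor_remainder_pos (hb : b > 3 * a ^ 2 / 8) (μ t : ℝ) :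
    0 < t ^ 2 + (4 * μ + a) * t + (6 * μ ^ 2 + 3 * a * μ + b) := by
  nlinarith [sq_nonneg (2 * t + 4 * μ + a), sq_nonneg (μ + a / 4)]

theorem quartic_lt_of_quarticDeriv_eq_zero (hb : b > 3 * a ^ 2 / 8) {μ x : ℝ}
    (hμ : quarticDeriv a b c μ = 0) (hx : x ≠ μ) : quartic a b c μ < quartic a b c x := by
  have hsq : 0 < (x - μ) ^ 2 := sq_pos_of_ne_zero (sub_ne_zero.mpr hx)
  have h := quartic_sub_quartic a b c x μ
  rw [hμ, zero_mul, zero_add] at h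
  nlinarith [mul_pos hsq (quartic_taylor_remainder_pos hb μ (x - μ))]

theorem quarticDeriv_ge {x : ℝ} (hx : 0 ≤ x) :
    2 * (b - 3 * a ^ 2 / 8) * x + c ≤ quarticDeriv a b c x := by
  have h : 0 ≤ 4 * x ^ 2 + 3 * a * x + 3 * a ^ 2 / 4 := by
    nlinarith [sq_nonneg (x + 3 * a / 8), sq_nonneg a]
  unfold quarticDeriv
  nlinarith [mul_nonneg hx h]

theorem exists_pos_quarticDeriv_eq_zero (hb : b > 3 * a ^ 2 / 8) (hc : c < 0) :
    ∃ μ, 0 < μ ∧ quarticDeriv a b c μ = 0 := by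
  have hk : 0 < 2 * (b - 3 * a ^ 2 / 8) := by linarith
  set M := -c / (2 * (b - 3 * a ^ 2 / 8))
  have hM : 0 ≤ M := div_nonneg (by linarith) hk.le
  have hqM : 0 ≤ quarticDeriv a b c M := by
    have h : 2 * (b - 3 * a ^ 2 / 8) * M + c ≤ quarticDeriv a b c M := quarticDeriv_ge hM
    rwa [mul_div_cancel₀ _ hk.ne', neg_add_cancel] at h
  have hq0 : quarticDeriv a b c 0 = c := by simp [quarticDeriv]
  have hcont : ContinuousOn (quarticDeriv a b c) (Set.Icc 0 M) := by
    unfold quarticDeriv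
    fun_prop
  obtain ⟨μ, hμ, hroot⟩ := intermediate_value_Icc hM hcont ⟨hq0.trans_le hc.le, hqM⟩
  refine ⟨μ, lt_of_le_of_ne hμ.1 ?_, hroot⟩
  rintro rfl
  exact hc.ne (hq0.symm.trans hroot)

end

/-- For `b > 3a²/8` and `c < 0`: the cubic `4x³ + 3ax² + 2bx + c = 0` has a unique real root
`μ`, which is positive, with `g(μ) = μ⁴ + aμ³ + bμ² + cμ < 0`; and whenever `d > −g(μ)`,
the quartic `x⁴ + ax³ + bx² + cx + d = 0` has no real roots. -/
theorem stmt_17 (a b c : ℝ)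
    (hb : b > 3 * a ^ 2 / 8) (hc : c < 0) :
    ∃ μ : ℝ,
      (∀ x : ℝ, 4 * x ^ 3 + 3 * a * x ^ 2 + 2 * b * x + c = 0 ↔ x = μ) ∧ 0 < μ ∧
      μ ^ 4 + a * μ ^ 3 + b * μ ^ 2 + c * μ < 0 ∧
      ∀ d : ℝ, d > -(μ ^ 4 + a * μ ^ 3 + b * μ ^ 2 + c * μ) →
        ∀ x : ℝ, x ^ 4 + a * x ^ 3 + b * x ^ 2 + c * x + d ≠ 0 := by
  obtain ⟨μ, hμpos, hμ⟩ := exists_pos_quarticDeriv_eq_zero hb hc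
  have hmin : ∀ x, x ≠ μ → quartic a b c μ < quartic a b c x := fun x hx =>
    quartic_lt_of_quarticDeriv_eq_zero hb hμ hx
  have hneg : quartic a b c μ < 0 := by
    simpa [quartic] using hmin 0 hμpos.ne
  refine ⟨μ, fun x => ⟨fun hx => ?_, fun hx => hx ▸ hμ⟩, hμpos, hneg, fun d hd x => ?_⟩
  · by_contra hne
    exact (hmin x hne).asymm (quartic_lt_of_quarticDeriv_eq_zero hb hx (Ne.symm hne))
  · change d > -quartic a b c μ at hd
    change quartic a b c x + d ≠ 0
    have hle : quartic a b c μ ≤ quartic a b c x := by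
      rcases eq_or_ne x μ with rfl | hx
      · exact le_rfl
      · exact (hmin x hx).le
    exact (show 0 < quartic a b c x + d by linarith).ne'
end

section
/- Let a, b, c be real numbers with b < 3a²/8 and c₂ < c < c₁, where c₁,₂ = (a/2)(b − a²/4) ± (2√6/9)·√((3a²/8 − b)³), so that the cubic 4x³ + 3ax² + 2bx + c = 0 has three distinct real roots μ₃ < μ₂ < μ₁ (μ₃ and μ₁ being the two local minima of g(x) = x⁴ + ax³ + bx² + cx). Set c₀ = (a/2)(b − a²/4). Then g(μ₃) < g(μ₁) if and only if c > c₀, g(μ₃) > g(μ₁) if and only if c < c₀, and g(μ₃) = g(μ₁) if and only if c = c₀; that is, the sign of c − c₀ determines which of the two local minima of the quartic family is the deeper one (equivalently the ordering of −δ₃ and −δ₁). -/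
/-!
Since `μ₁, μ₂, μ₃` are the three roots of `4x³ + 3ax² + 2bx + c`, Vieta's formulas express
`a`, `b`, `c` through them. In these coordinates both `g(μ₃) - g(μ₁)` and `c₀ - c` factor as a
positive quantity times `μ₁ + μ₃ - 2μ₂`, so they have the same sign: the deeper minimum is the one
on the side of the midpoint of `[μ₃, μ₁]` away from the local maximum `μ₂`.
-/

theorem cubic_coeffs_eq_of_three_roots {R : Type*} [CommRing R] [IsDomain R]
    {d p q r x y z : R} (hxy : x ≠ y) (hyz : y ≠ z) (hxz : x ≠ z)
    (hx : d * x ^ 3 + p * x ^ 2 + q * x + r = 0)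
    (hy : d * y ^ 3 + p * y ^ 2 + q * y + r = 0)
    (hz : d * z ^ 3 + p * z ^ 2 + q * z + r = 0) :
    p = -d * (x + y + z) ∧ q = d * (x * y + y * z + z * x) ∧ r = -d * (x * y * z) := by
  have hxy' : d * (x ^ 2 + x * y + y ^ 2) + p * (x + y) + q = 0 := by
    refine (mul_eq_zero.mp ?_).resolve_left (sub_ne_zero.mpr hxy)
    linear_combination hx - hy
  have hyz' : d * (y ^ 2 + y * z + z ^ 2) + p * (y + z) + q = 0 := by
    refine (mul_eq_zero.mp ?_).resolve_left (sub_ne_zero.mpr hyz)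
    linear_combination hy - hz
  have hp : p = -d * (x + y + z) := by
    have : (x - z) * (d * (x + y + z) + p) = 0 := by linear_combination hxy' - hyz'
    linear_combination (mul_eq_zero.mp this).resolve_left (sub_ne_zero.mpr hxz)
  have hq : q = d * (x * y + y * z + z * x) := by linear_combination hxy' - (x + y) * hp
  exact ⟨hp, hq, by linear_combination hx - x ^ 2 * hp - x * hq⟩

section Sign

variable {α : Type*} [Ring α] [LinearOrder α] [IsStrictOrderedRing α]

theorem lt_gt_eq_iff_of_sign_sub_eq {x y u v : α}
    (h : SignType.sign (x - y) = SignType.sign (u - v)) :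
    (x < y ↔ u < v) ∧ (x > y ↔ u > v) ∧ (x = y ↔ u = v) := by
  refine ⟨?_, ?_, ?_⟩
  · rw [← sub_neg, ← sign_eq_neg_one_iff, h, sign_eq_neg_one_iff, sub_neg]
  · rw [gt_iff_lt, gt_iff_lt, ← sub_pos, ← sign_eq_one_iff, h, sign_eq_one_iff, sub_pos]
  · rw [← sub_eq_zero, ← sign_eq_zero_iff, h, sign_eq_zero_iff, sub_eq_zero]

theorem lt_gt_eq_iff_of_sub_eq_pos_mul {x y u v k l s : α} (hk : 0 < k) (hl : 0 < l)
    (hxy : x - y = k * s) (huv : u - v = l * s) :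
    (x < y ↔ u < v) ∧ (x > y ↔ u > v) ∧ (x = y ↔ u = v) := by
  apply lt_gt_eq_iff_of_sign_sub_eq
  rw [hxy, huv, sign_mul, sign_mul, sign_pos hk, sign_pos hl]

end Sign

theorem stmt_19_general (a b c c₀ μ₁ μ₂ μ₃ : ℝ)
    (hc₀ : c₀ = a / 2 * (b - a ^ 2 / 4))
    (hμ₁ : 4 * μ₁ ^ 3 + 3 * a * μ₁ ^ 2 + 2 * b * μ₁ + c = 0)
    (hμ₂ : 4 * μ₂ ^ 3 + 3 * a * μ₂ ^ 2 + 2 * b * μ₂ + c = 0)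
    (hμ₃ : 4 * μ₃ ^ 3 + 3 * a * μ₃ ^ 2 + 2 * b * μ₃ + c = 0)
    (horder : μ₃ < μ₂ ∧ μ₂ < μ₁) :
    ((μ₃ ^ 4 + a * μ₃ ^ 3 + b * μ₃ ^ 2 + c * μ₃ < μ₁ ^ 4 + a * μ₁ ^ 3 + b * μ₁ ^ 2 + c * μ₁) ↔
        c₀ < c) ∧
    ((μ₃ ^ 4 + a * μ₃ ^ 3 + b * μ₃ ^ 2 + c * μ₃ > μ₁ ^ 4 + a * μ₁ ^ 3 + b * μ₁ ^ 2 + c * μ₁) ↔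
        c < c₀) ∧
    ((μ₃ ^ 4 + a * μ₃ ^ 3 + b * μ₃ ^ 2 + c * μ₃ = μ₁ ^ 4 + a * μ₁ ^ 3 + b * μ₁ ^ 2 + c * μ₁) ↔
        c = c₀) := by
  rw [@eq_comm _ c c₀]
  obtain ⟨h32, h21⟩ := horder
  obtain ⟨ha, hb, hc⟩ := cubic_coeffs_eq_of_three_roots h21.ne' h32.ne'
    (h32.trans h21).ne' hμ₁ hμ₂ hμ₃
  obtain rfl : a = -4 / 3 * (μ₁ + μ₂ + μ₃) := by linarith
  obtain rfl : b = 2 * (μ₁ * μ₂ + μ₂ * μ₃ + μ₃ * μ₁) := by linarith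
  subst hc hc₀
  exact lt_gt_eq_iff_of_sub_eq_pos_mul (k := (μ₁ - μ₃) ^ 3 / 3)
    (l := 4 / 27 * (2 * μ₁ - μ₂ - μ₃) * (μ₁ + μ₂ - 2 * μ₃)) (s := μ₁ + μ₃ - 2 * μ₂)
    (div_pos (pow_pos (by linarith) 3) three_pos)
    (mul_pos (mul_pos (by norm_num) (by linarith)) (by linarith)) (by ring) (by ring)

/-- For `b < 3a²/8` and `c₂ < c < c₁` (with `c₁,₂ = c₀ ± (2√6/9)√((3a²/8 − b)³)`,
`c₀ = (a/2)(b − a²/4)`), let `μ₃ < μ₂ < μ₁` be the three real roots of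
`4x³ + 3ax² + 2bx + c = 0` and `g(x) = x⁴ + ax³ + bx² + cx`. Then
`g(μ₃) < g(μ₁) ↔ c > c₀`, `g(μ₃) > g(μ₁) ↔ c < c₀`, and `g(μ₃) = g(μ₁) ↔ c = c₀`. -/
theorem stmt_19 (a b c c₀ c₁ c₂ μ₁ μ₂ μ₃ : ℝ)
    (hb : b < 3 * a ^ 2 / 8)
    (hc₀ : c₀ = a / 2 * (b - a ^ 2 / 4))
    (hc₁ : c₁ = c₀ + 2 * Real.sqrt 6 / 9 * Real.sqrt ((3 * a ^ 2 / 8 - b) ^ 3))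
    (hc₂ : c₂ = c₀ - 2 * Real.sqrt 6 / 9 * Real.sqrt ((3 * a ^ 2 / 8 - b) ^ 3))
    (hc : c₂ < c ∧ c < c₁)
    (hμ₁ : 4 * μ₁ ^ 3 + 3 * a * μ₁ ^ 2 + 2 * b * μ₁ + c = 0)
    (hμ₂ : 4 * μ₂ ^ 3 + 3 * a * μ₂ ^ 2 + 2 * b * μ₂ + c = 0)
    (hμ₃ : 4 * μ₃ ^ 3 + 3 * a * μ₃ ^ 2 + 2 * b * μ₃ + c = 0)
    (horder : μ₃ < μ₂ ∧ μ₂ < μ₁) :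
    ((μ₃ ^ 4 + a * μ₃ ^ 3 + b * μ₃ ^ 2 + c * μ₃ < μ₁ ^ 4 + a * μ₁ ^ 3 + b * μ₁ ^ 2 + c * μ₁) ↔
        c₀ < c) ∧
    ((μ₃ ^ 4 + a * μ₃ ^ 3 + b * μ₃ ^ 2 + c * μ₃ > μ₁ ^ 4 + a * μ₁ ^ 3 + b * μ₁ ^ 2 + c * μ₁) ↔
        c < c₀) ∧
    ((μ₃ ^ 4 + a * μ₃ ^ 3 + b * μ₃ ^ 2 + c * μ₃ = μ₁ ^ 4 + a * μ₁ ^ 3 + b * μ₁ ^ 2 + c * μ₁) ↔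
        c = c₀) :=
  stmt_19_general a b c c₀ μ₁ μ₂ μ₃ hc₀ hμ₁ hμ₂ hμ₃ horder
end
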